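/- arXiv:1301.1421 — 6 statements merged into one kernel-verified Lean document; each statement's English description precedes it below -/
import Mathlib

section
/- Let R be a commutative ring containing C(t), σ_q a ring automorphism of R extending f(t) ↦ f(qt), and q of multiplicative order N > 1. If δ = (1/((q-1)t))(σ_q - id_R) satisfies δ^N = 0 (as a composite of additive endomorphisms), then σ_q^N = id_R. -/
/-!
Write `δ = u (σ - 1)` with `u = t⁻¹ / (q - 1)`. Since `σ u = q⁻¹ u`, moving `u` to the left
past `σ - 1` turns it into `q⁻¹ σ - 1`, so `δ ^ N = u ^ N ∏_{i < N} (q⁻ⁱ σ - 1)`. As the `q⁻ⁱ`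
run over all `N`-th roots of unity, `∏_{i < N} (q⁻ⁱ X - 1)` is a nonzero multiple of
`X ^ N - 1`; since `u` is a unit, `δ ^ N = 0` forces `σ ^ N = 1`.
-/

open Polynomial Finset

theorem IsPrimitiveRoot.prod_range_C_pow_mul_X_sub_one {K : Type*} [Field K] {r : K} {N : ℕ}
    (hr : IsPrimitiveRoot r N) (hN : 0 < N) :
    ∏ i ∈ range N, (C (r ^ i) * X - 1) = C (∏ i ∈ range N, r ^ i) * (X ^ N - 1) := by
  have factor (i : ℕ) : C (r ^ i) * X - 1 = C (r ^ i) * (X - C (r⁻¹ ^ i * 1)) := by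
    rw [mul_sub, ← C_mul, mul_one, inv_pow, mul_inv_cancel₀ (pow_ne_zero i (hr.ne_zero hN.ne')),
      C_1]
  rw [prod_congr rfl fun i _ => factor i, prod_mul_distrib, map_prod,
    ← X_pow_sub_C_eq_prod hr.inv hN (one_pow N), C_1]

theorem Module.End.pow_eq_one_of_aeval_prod_C_pow_mul_X_sub_one_eq_zero {K M : Type*} [Field K]
    [AddCommGroup M] [Module K M] (f : Module.End K M) {r : K} {N : ℕ}
    (hr : IsPrimitiveRoot r N) (hN : 0 < N)
    (h : aeval f (∏ i ∈ range N, (C (r ^ i) * X - 1)) = 0) :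
    f ^ N = 1 := by
  have hprod : ∏ i ∈ range N, r ^ i ≠ 0 :=
    prod_ne_zero_iff.2 fun i _ => pow_ne_zero i (hr.ne_zero hN.ne')
  rwa [hr.prod_range_C_pow_mul_X_sub_one hN, map_mul, aeval_C, Algebra.algebraMap_eq_smul_one,
    smul_mul_assoc, one_mul, smul_eq_zero_iff_right hprod, map_sub, map_pow, aeval_X, map_one,
    sub_eq_zero] at h

section

variable {K R : Type*} [CommRing K] [CommRing R] [Algebra K R]

theorem AlgHom.sub_one_mul_lmul_of_map_eq (σ : R →ₐ[K] R) {u : R} {r : K}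
    (hu : σ u = algebraMap K R r * u) :
    (σ.toLinearMap - 1) * Algebra.lmul K R u =
      Algebra.lmul K R u * aeval σ.toLinearMap (C r * X - 1) := by
  ext x
  simp [hu, Algebra.smul_def]
  ring

theorem AlgHom.lmul_mul_sub_one_pow (σ : R →ₐ[K] R) {u : R} {r : K}
    (hu : σ u = algebraMap K R r * u) (n : ℕ) :
    (Algebra.lmul K R u * (σ.toLinearMap - 1)) ^ n =
      Algebra.lmul K R (u ^ n) * aeval σ.toLinearMap (∏ i ∈ range n, (C (r ^ i) * X - 1)) := by
  induction n with
  | zero => rw [pow_zero, pow_zero, prod_range_zero, map_one, map_one, one_mul]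
  | succ n ih =>
    have hun : σ (u ^ n) = algebraMap K R (r ^ n) * u ^ n := by
      rw [map_pow, hu, mul_pow, map_pow]
    rw [pow_succ', ih, prod_range_succ, mul_comm _ (C (r ^ n) * X - 1), map_mul, pow_succ',
      map_mul, mul_assoc, ← mul_assoc (σ.toLinearMap - 1), σ.sub_one_mul_lmul_of_map_eq hun]
    simp only [mul_assoc]

end

/-- Let `R ⊇ C(t)` be a commutative ring, `σ_q` a ring automorphism of `R` with
`σ_q(t) = q·t` and fixing `C`, where `q` is a primitive `N`-th root of unity
(`N > 1`), and `t` invertible.  If `δ = (1/((q-1)t))(σ_q - id)` satisfies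
`δ^N = 0` (as an `N`-fold composite), then `σ_q^N = id`. -/
theorem sigma_pow_orderOf_eq_id {C R : Type*} [Field C] [CommRing R] [Algebra C R]
    (q : C) (N : ℕ) (hN : 1 < N) (hq : IsPrimitiveRoot q N)
    (t : Rˣ) (σ : R ≃+* R)
    (hσC : ∀ c : C, σ (algebraMap C R c) = algebraMap C R c)
    (hσt : σ (t : R) = algebraMap C R q * t)
    (δ : R → R)
    (hδ : ∀ x, δ x = algebraMap C R (q - 1)⁻¹ * (↑t⁻¹ : R) * (σ x - x))
    (h : δ^[N] = fun _ => (0 : R)) :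
    ∀ x, (⇑σ)^[N] x = x := by
  let σA : R →ₐ[C] R := AlgHom.mk (σ : R →+* R) hσC
  have hσt_inv : σ ↑t⁻¹ = algebraMap C R q⁻¹ * ↑t⁻¹ := by
    refine left_inv_eq_right_inv (by rw [← map_mul, Units.inv_mul, map_one]) ?_
    rw [hσt, mul_mul_mul_comm, ← map_mul, mul_inv_cancel₀ (hq.ne_zero (by omega)), map_one,
      one_mul, Units.mul_inv]
  set u : R := algebraMap C R (q - 1)⁻¹ * ↑t⁻¹
  have hu : IsUnit u :=
    ((isUnit_iff_ne_zero.2 (inv_ne_zero (sub_ne_zero.2 (hq.ne_one hN)))).map _).mul t⁻¹.isUnit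
  have hσu : σA u = algebraMap C R q⁻¹ * u := by
    show σ (_ * _) = _
    rw [map_mul, hσC, hσt_inv, mul_left_comm]
  have hδ_eq : δ = ⇑(Algebra.lmul C R u * (σA.toLinearMap - 1)) := funext hδ
  have hδ_pow : (Algebra.lmul C R u * (σA.toLinearMap - 1)) ^ N = 0 :=
    LinearMap.ext fun x => by rw [Module.End.pow_apply, ← hδ_eq, h]; rfl
  rw [σA.lmul_mul_sub_one_pow hσu, ((hu.pow N).map (Algebra.lmul C R)).mul_right_eq_zero]
    at hδ_pow
  have hσ_pow := Module.End.pow_eq_one_of_aeval_prod_C_pow_mul_X_sub_one_eq_zero _ hq.inv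
    (by omega) hδ_pow
  intro x
  exact (Module.End.pow_apply σA.toLinearMap N x).symm.trans (LinearMap.congr_fun hσ_pow x)
end

section
/- If q is not a root of unity (so [k]_q ≠ 0 for all k ≥ 1), then any iterative q-difference operator on R satisfies δ^{(k)} = (1/[k]_q!)(δ^{(1)})^k for all k ∈ ℕ; conversely, defining δ^{(k)} by this formula from δ^{(1)} = (1/((q-1)t))(σ_q - id) yields an iterative q-difference operator. -/
/-- The Gaussian (q-)binomial coefficient, defined by the q-Pascal recursion. -/
def qBinom {K : Type*} [CommRing K] (q : K) : ℕ → ℕ → K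
  | _, 0 => 1
  | 0, _ + 1 => 0
  | n + 1, k + 1 => qBinom q n k + q ^ (k + 1) * qBinom q n (k + 1)

/-- The q-integer `[k]_q = 1 + q + ⋯ + q^(k-1)`. -/
def qInt {K : Type*} [CommRing K] (q : K) (k : ℕ) : K := ∑ i ∈ Finset.range k, q ^ i

/-- The q-factorial `[k]_q! = [k]_q [k-1]_q ⋯ [1]_q`. -/
def qFact {K : Type*} [CommRing K] (q : K) : ℕ → K
  | 0 => 1
  | n + 1 => qFact q n * qInt q (n + 1)

section

variable {C R : Type*} [Field C] [CommRing R] [Algebra C R]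
variable (q : C) (t : Rˣ) (σ : R ≃+* R)

/-- Axioms (1)–(5) of Hardouin's Definition 2.4: `δ*` is an iterative
q-difference operator on `R` (relative to `σ_q` and `t`). -/
def IsIterQDiffOp (δ : ℕ → R → R) : Prop :=
  (∀ x, δ 0 x = x)
  ∧ (∀ x, δ 1 x = algebraMap C R (q - 1)⁻¹ * (↑t⁻¹ : R) * (σ x - x))
  ∧ (∀ k x y, δ k (x + y) = δ k x + δ k y)
  ∧ (∀ k x y, δ k (x * y)
      = ∑ i ∈ Finset.range (k + 1), (⇑σ)^[i] (δ (k - i) x) * δ i y)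
  ∧ (∀ i j x, δ i (δ j x) = algebraMap C R (qBinom q (i + j) i) * δ (i + j) x)

end

/-!
The operator `δ⁽¹⁾ = (σ - id) / ((q - 1) t)` is a `σ`-derivation that `q`-commutes with `σ`:
`δ⁽¹⁾ ∘ σ = q σ ∘ δ⁽¹⁾`. For any such operator the powers satisfy a `q`-Leibniz rule with
Gaussian binomial coefficients, and `[i+j choose i]_q = [i+j]_q! / ([i]_q! [j]_q!)` once no
`[k]_q` vanishes, so the divided powers `δ⁽¹⁾ᵏ / [k]_q!` satisfy axioms (1)–(5). Conversely,
axiom (5) with `i = 1` gives `[k+1]_q δ⁽ᵏ⁺¹⁾ = δ⁽¹⁾ ∘ δ⁽ᵏ⁾`, which determines `δ⁽ᵏ⁾` by induction.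
-/

section QNumbers

variable {K : Type*} [CommRing K] (q : K)

@[simp] lemma qBinom_zero_right (n : ℕ) : qBinom q n 0 = 1 := by cases n <;> rfl

lemma qBinom_succ_succ (n k : ℕ) :
    qBinom q (n + 1) (k + 1) = qBinom q n k + q ^ (k + 1) * qBinom q n (k + 1) := rfl

lemma qBinom_eq_zero_of_lt {n k : ℕ} (h : n < k) : qBinom q n k = 0 := by
  obtain ⟨k, rfl⟩ := Nat.exists_eq_add_one_of_ne_zero (by omega : k ≠ 0)
  induction n generalizing k with
  | zero => rfl
  | succ n ih =>
    obtain ⟨k, rfl⟩ := Nat.exists_eq_add_one_of_ne_zero (by omega : k ≠ 0)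
    rw [qBinom_succ_succ, ih k (by omega), ih (k + 1) (by omega), mul_zero, add_zero]

@[simp] lemma qBinom_self (n : ℕ) : qBinom q n n = 1 := by
  induction n with
  | zero => rfl
  | succ n ih =>
    rw [qBinom_succ_succ, ih, qBinom_eq_zero_of_lt q n.lt_succ_self, mul_zero, add_zero]

lemma qInt_add (a b : ℕ) : qInt q (a + b) = qInt q a + q ^ a * qInt q b := by
  simp only [qInt, Finset.sum_range_add, pow_add, Finset.mul_sum]

lemma qBinom_one_right (n : ℕ) : qBinom q n 1 = qInt q n := by
  induction n with
  | zero => rfl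
  | succ n ih => rw [qBinom_succ_succ, ih, add_comm n, qInt_add]; simp [qInt]

lemma qFact_succ (n : ℕ) : qFact q (n + 1) = qFact q n * qInt q (n + 1) := rfl

lemma qBinom_mul_qFact_mul_qFact (a b : ℕ) :
    qBinom q (a + b) a * (qFact q a * qFact q b) = qFact q (a + b) := by
  induction a generalizing b with
  | zero => simp [qFact]
  | succ a iha =>
    induction b with
    | zero => simp [qFact]
    | succ b ihb =>
      have h1 := iha (b + 1)
      rw [← add_assoc, Nat.add_right_comm] at h1
      rw [← add_assoc, qBinom_succ_succ, qFact_succ q (a + 1 + b),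
        show a + 1 + b + 1 = (a + 1) + (b + 1) by ring, qInt_add q (a + 1)]
      rw [qFact_succ q a, qFact_succ q b] at *
      linear_combination qInt q (a + 1) * h1 + q ^ (a + 1) * qInt q (b + 1) * ihb

end QNumbers

section NotRootOfUnity

variable {K : Type*} [Field K] {q : K} (hq : ∀ n : ℕ, 0 < n → q ^ n ≠ 1)
include hq

lemma qInt_ne_zero {k : ℕ} (hk : 0 < k) : qInt q k ≠ 0 := by
  intro h
  have := geom_sum_mul q k
  rw [← qInt, h, zero_mul, eq_comm, sub_eq_zero] at this
  exact hq k hk this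

lemma qFact_ne_zero (k : ℕ) : qFact q k ≠ 0 := by
  induction k with
  | zero => exact one_ne_zero
  | succ k ih => exact mul_ne_zero ih (qInt_ne_zero hq k.succ_pos)

lemma qBinom_eq_qFact_div (a b : ℕ) :
    qBinom q (a + b) a = qFact q (a + b) / (qFact q a * qFact q b) := by
  rw [eq_div_iff (mul_ne_zero (qFact_ne_zero hq a) (qFact_ne_zero hq b)),
    qBinom_mul_qFact_mul_qFact]

end NotRootOfUnity

open Finset

section TwistedLeibniz

variable {C R : Type*} [CommRing C] [CommRing R] [Algebra C R] (q : C)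

lemma sum_range_qBinom_succ_smul {M : Type*} [AddCommMonoid M] [Module C M] (k : ℕ)
    (g : ℕ → M) :
    ∑ i ∈ range (k + 2), qBinom q (k + 1) i • g i
      = ∑ i ∈ range (k + 1), qBinom q k i • g (i + 1)
        + ∑ i ∈ range (k + 1), (q ^ i * qBinom q k i) • g i := by
  have hshift := sum_range_succ' (fun i => (q ^ i * qBinom q k i) • g i) (k + 1)
  rw [sum_range_succ, qBinom_eq_zero_of_lt q k.lt_succ_self, mul_zero, zero_smul, add_zero]
    at hshift
  rw [sum_range_succ', hshift]
  simp only [qBinom_succ_succ, add_smul, sum_add_distrib, qBinom_zero_right, pow_succ', mul_assoc,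
    pow_zero, one_mul, add_assoc]

variable {q} (σ : R →ₐ[C] R) (D : Module.End C R)

lemma apply_pow_apply_eq_pow_smul (hDσ : ∀ x, D (σ x) = q • σ (D x)) (i : ℕ) (x : R) :
    D ((σ ^ i) x) = q ^ i • (σ ^ i) (D x) := by
  induction i with
  | zero => simp
  | succ i ih => rw [pow_succ', AlgHom.mul_apply, hDσ, ih, map_smul, smul_smul, ← pow_succ',
      AlgHom.mul_apply]

lemma pow_apply_mul_eq_sum_qBinom (hD : ∀ x y, D (x * y) = σ x * D y + D x * y)
    (hDσ : ∀ x, D (σ x) = q • σ (D x)) (k : ℕ) (x y : R) :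
    (D ^ k) (x * y)
      = ∑ i ∈ range (k + 1), qBinom q k i • ((σ ^ i) ((D ^ (k - i)) x) * (D ^ i) y) := by
  induction k with
  | zero => simp
  | succ k ih =>
    rw [sum_range_qBinom_succ_smul, pow_succ', Module.End.mul_apply, ih, map_sum,
      ← sum_add_distrib]
    refine sum_congr rfl fun i hi => ?_
    have hik : k + 1 - i = k - i + 1 := by have := mem_range.1 hi; omega
    rw [map_smul, hD, apply_pow_apply_eq_pow_smul σ D hDσ, hik, Nat.add_sub_add_right,
      pow_succ' D (k - i), pow_succ' σ i, pow_succ' D i]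
    simp only [Module.End.mul_apply, AlgHom.mul_apply, smul_add, smul_mul_assoc, smul_smul,
      mul_comm (qBinom q k i)]

end TwistedLeibniz

section DividedPowers

variable {C R : Type*} [Field C] [CommRing R] [Algebra C R] {q : C}

variable (q) in
def qDividedPower (D : Module.End C R) (k : ℕ) : Module.End C R := (qFact q k)⁻¹ • D ^ k

lemma qDividedPower_apply (D : Module.End C R) (k : ℕ) (x : R) :
    qDividedPower q D k x = (qFact q k)⁻¹ • (D ^ k) x := rfl

variable (hq : ∀ n : ℕ, 0 < n → q ^ n ≠ 1) (D : Module.End C R)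
include hq

lemma qDividedPower_mul_qDividedPower (i j : ℕ) :
    qDividedPower q D i * qDividedPower q D j
      = qBinom q (i + j) i • qDividedPower q D (i + j) := by
  simp only [qDividedPower, smul_mul_smul_comm, ← pow_add, smul_smul, qBinom_eq_qFact_div hq]
  congr 1
  field_simp [qFact_ne_zero hq]

lemma qDividedPower_apply_mul (σ : R →ₐ[C] R) (hD : ∀ x y, D (x * y) = σ x * D y + D x * y)
    (hDσ : ∀ x, D (σ x) = q • σ (D x)) (k : ℕ) (x y : R) :
    qDividedPower q D k (x * y)
      = ∑ i ∈ range (k + 1),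
          (σ ^ i) (qDividedPower q D (k - i) x) * qDividedPower q D i y := by
  rw [qDividedPower_apply, pow_apply_mul_eq_sum_qBinom σ D hD hDσ, smul_sum]
  refine sum_congr rfl fun i hi => ?_
  obtain ⟨j, rfl⟩ : ∃ j, k = i + j := ⟨k - i, by have := mem_range.1 hi; omega⟩
  rw [Nat.add_sub_cancel_left, qDividedPower_apply, qDividedPower_apply, map_smul,
    smul_mul_smul_comm, smul_smul, qBinom_eq_qFact_div hq]
  congr 1
  field_simp [qFact_ne_zero hq]

lemma eq_qDividedPower_of_qInt_smul (δ : ℕ → R → R) (h0 : ∀ x, δ 0 x = x)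
    (hsucc : ∀ k x, qInt q (k + 1) • δ (k + 1) x = D (δ k x)) (k : ℕ) (x : R) :
    δ k x = qDividedPower q D k x := by
  induction k generalizing x with
  | zero => simp [qDividedPower_apply, h0, qFact]
  | succ k ih =>
    rw [← inv_smul_smul₀ (qInt_ne_zero hq k.succ_pos) (δ (k + 1) x), hsucc, ih,
      qDividedPower_apply, map_smul, smul_smul, qDividedPower_apply, qFact_succ, mul_inv,
      mul_comm, pow_succ', Module.End.mul_apply]

end DividedPowers

section QDifference

variable {C R : Type*} [Field C] [CommRing R] [Algebra C R] (q : C) (t : Rˣ) (σ : R →ₐ[C] R)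

def qDiff : Module.End C R where
  toFun y := algebraMap C R (q - 1)⁻¹ * (↑t⁻¹ : R) * (σ y - y)
  map_add' x y := by simp only [map_add]; ring
  map_smul' c x := by simp only [Algebra.smul_def, map_mul, AlgHom.commutes, RingHom.id_apply]; ring

lemma qDiff_apply (y : R) :
    qDiff q t σ y = algebraMap C R (q - 1)⁻¹ * (↑t⁻¹ : R) * (σ y - y) := rfl

lemma qDiff_mul (x y : R) : qDiff q t σ (x * y) = σ x * qDiff q t σ y + qDiff q t σ x * y := by
  simp only [qDiff_apply, map_mul]; ring

lemma qDiff_apply_apply_eq_smul (hσt : σ t = algebraMap C R q * t) (x : R) :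
    qDiff q t σ (σ x) = q • σ (qDiff q t σ x) := by
  have hσt_inv : algebraMap C R q * σ ↑t⁻¹ = ↑t⁻¹ := by
    have h1 : σ ↑t⁻¹ * σ t = 1 := by rw [← map_mul, Units.inv_mul, map_one]
    have h2 : (t : R) * ↑t⁻¹ = 1 := Units.mul_inv t
    linear_combination (-(algebraMap C R q * σ ↑t⁻¹)) * h2 + (↑t⁻¹ : R) * h1
      - (σ ↑t⁻¹ * ↑t⁻¹) * hσt
  simp only [qDiff_apply, Algebra.smul_def, map_mul, map_sub, AlgHom.commutes]
  linear_combination (-(algebraMap C R (q - 1)⁻¹ * (σ (σ x) - σ x))) * hσt_inv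

end QDifference

section IterQDiffOp

variable {C R : Type*} [Field C] [CommRing R] [Algebra C R] {q : C} {t : Rˣ}
  (hq : ∀ n : ℕ, 0 < n → q ^ n ≠ 1) (σ : R ≃ₐ[C] R)
include hq

lemma IsIterQDiffOp.apply_eq_qDividedPower_qDiff {δ : ℕ → R → R}
    (hδ : IsIterQDiffOp q t σ.toRingEquiv δ) (k : ℕ) (x : R) :
    δ k x = qDividedPower q (qDiff q t σ) k x := by
  obtain ⟨h0, h1, -, -, h5⟩ := hδ
  refine eq_qDividedPower_of_qInt_smul hq _ δ h0 (fun k x => ?_) k x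
  rw [← qBinom_one_right, Algebra.smul_def, add_comm, ← h5, h1]
  rfl

lemma isIterQDiffOp_qDividedPower_qDiff (hσt : σ t = algebraMap C R q * t) :
    IsIterQDiffOp q t σ.toRingEquiv (fun k => qDividedPower q (qDiff q t σ) k) := by
  refine ⟨fun x => ?_, fun x => ?_, fun k => map_add _, fun k x y => ?_, fun i j x => ?_⟩
  · simp [qDividedPower_apply, qFact]
  · simp [qDividedPower_apply, qFact, qInt, qDiff_apply]
  · simpa [AlgHom.coe_pow] using
      qDividedPower_apply_mul hq _ (σ : R →ₐ[C] R) (qDiff_mul q t σ)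
        (qDiff_apply_apply_eq_smul q t σ hσt) k x y
  · dsimp only
    rw [← Module.End.mul_apply, qDividedPower_mul_qDividedPower hq, LinearMap.smul_apply,
      Algebra.smul_def]

end IterQDiffOp

section

variable {C R : Type*} [Field C] [CommRing R] [Algebra C R]
variable (q : C) (t : Rˣ) (σ : R ≃+* R)

theorem iterQDiffOp_of_not_rootOfUnity
    (hqroot : ∀ n : ℕ, 0 < n → q ^ n ≠ 1)
    (hσC : ∀ c : C, σ (algebraMap C R c) = algebraMap C R c)
    (hσt : σ (t : R) = algebraMap C R q * t) :
    (∀ δ : ℕ → R → R, IsIterQDiffOp q t σ δ →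
      ∀ k x, δ k x = algebraMap C R (qFact q k)⁻¹ *
        (fun y => algebraMap C R (q - 1)⁻¹ * (↑t⁻¹ : R) * (σ y - y))^[k] x)
    ∧ (∀ δ : ℕ → R → R,
        (∀ k x, δ k x = algebraMap C R (qFact q k)⁻¹ *
          (fun y => algebraMap C R (q - 1)⁻¹ * (↑t⁻¹ : R) * (σ y - y))^[k] x) →
        IsIterQDiffOp q t σ δ) := by
  set σ' : R ≃ₐ[C] R := AlgEquiv.ofRingEquiv hσC
  have hformula : ∀ k x, qDividedPower q (qDiff q t σ') k x = algebraMap C R (qFact q k)⁻¹ *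
      (fun y => algebraMap C R (q - 1)⁻¹ * (↑t⁻¹ : R) * (σ y - y))^[k] x := fun k x => by
    rw [qDividedPower_apply, Module.End.pow_apply, Algebra.smul_def]
    rfl
  refine ⟨fun δ hδ k x => ?_, fun δ hδ => ?_⟩
  · rw [← hformula]
    exact IsIterQDiffOp.apply_eq_qDividedPower_qDiff hqroot σ' hδ k x
  · obtain rfl : δ = fun k => ⇑(qDividedPower q (qDiff q t σ') k) :=
      funext₂ fun k x => (hδ k x).trans (hformula k x).symm
    exact isIterQDiffOp_qDividedPower_qDiff hqroot σ' hσt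

end
end

section
/- Let H be a bialgebra over a field, R a commutative H-module algebra, I an ideal and coideal of the smash product R#H, and A = R#H/I. If A is cocommutative as an R-coalgebra, then for all h ∈ H and x ∈ R, the congruence Σ (1#h₁)x ⊗ (1#h₂) ≡ Σ (1#h₁) ⊗ (1#h₂)x holds modulo I⊗(R#H) + (R#H)⊗I in (R#H) ⊗_R (R#H); i.e., Δ(A) ⊆ A ×_R A. -/
/-!
In `R#H` the smash relation together with coassociativity gives `Δ(a x) = Δ(a) (x ⊗ 1)`, i.e.
`Δ ∘ ρₓ = (ρₓ ⊗ id) ∘ Δ` for right multiplication `ρₓ` by `x ∈ R`. Writing `τ` for the flip and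
`J = I ⊗ (R#H) + (R#H) ⊗ I`, cocommutativity modulo `J` then yields
`(ρₓ ⊗ id) Δ(a) = Δ(a x) ≡ τ Δ(a x) = (id ⊗ ρₓ) τ Δ(a) ≡ (id ⊗ ρₓ) Δ(a)`,
the last step because `id ⊗ ρₓ` preserves `J`, `I` being a right ideal.
-/

open TensorProduct

/-- The submodule `I ⊗ A + A ⊗ I` of `A ⊗_R A` determined by a subset `I ⊆ A`. -/
def tensorIdealSpan (R A : Type*) [CommRing R] [Ring A] [Module R A] (I : Set A) :
    Submodule R (TensorProduct R A A) :=
  Submodule.span R {z : TensorProduct R A A |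
    (∃ u ∈ I, ∃ v : A, z = u ⊗ₜ[R] v) ∨ (∃ u ∈ I, ∃ v : A, z = v ⊗ₜ[R] u)}

theorem rTensor_sub_lTensor_mem_of_sub_comm_mem {R A : Type*} [CommRing R] [AddCommGroup A]
    [Module R A] {J : Submodule R (A ⊗[R] A)} (D : A →ₗ[R] A ⊗[R] A)
    (hD : ∀ a, D a - TensorProduct.comm R A A (D a) ∈ J) (f : A →ₗ[R] A)
    (hf : ∀ z ∈ J, f.lTensor A z ∈ J) {a : A} (ha : D (f a) = f.rTensor A (D a)) :
    f.rTensor A (D a) - f.lTensor A (D a) ∈ J := by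
  have hsplit : f.rTensor A (D a) - f.lTensor A (D a)
      = (D (f a) - TensorProduct.comm R A A (D (f a)))
        - f.lTensor A (D a - TensorProduct.comm R A A (D a)) := by
    rw [ha, map_sub, LinearMap.lTensor_comm]
    abel
  rw [hsplit]
  exact J.sub_mem (hD _) (hf _ (hD a))

theorem lTensor_mem_tensorIdealSpan {R A : Type*} [CommRing R] [Ring A] [Module R A]
    {I : Set A} (f : A →ₗ[R] A) (hf : ∀ u ∈ I, f u ∈ I) {z : A ⊗[R] A}
    (hz : z ∈ tensorIdealSpan R A I) : f.lTensor A z ∈ tensorIdealSpan R A I := by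
  induction hz using Submodule.span_induction with
  | mem z hz =>
    apply Submodule.subset_span
    rcases hz with ⟨u, hu, v, rfl⟩ | ⟨u, hu, v, rfl⟩
    · exact Or.inl ⟨u, hu, f v, rfl⟩
    · exact Or.inr ⟨f u, hf u hu, v, rfl⟩
  | zero => simp
  | add _ _ _ _ h₁ h₂ => rw [map_add]; exact Submodule.add_mem _ h₁ h₂
  | smul r _ _ h => rw [map_smul]; exact Submodule.smul_mem _ r h

section RingOverAlgebra

variable {k R A : Type*} [CommRing k] [CommRing R] [Algebra k R] [Ring A] [Algebra k A]
  [Module R A] {ιR : R →ₐ[k] A}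

theorem isScalarTower_of_smul_eq_mul (hsmul : ∀ (x : R) (a : A), x • a = ιR x * a) :
    IsScalarTower R A A :=
  ⟨fun x a b => by rw [smul_eq_mul, smul_eq_mul, hsmul, hsmul, mul_assoc]⟩

theorem smulCommClass_of_smul_eq_mul (hsmul : ∀ (x : R) (a : A), x • a = ιR x * a) :
    SMulCommClass R k A :=
  ⟨fun x c a => by rw [hsmul, hsmul, mul_smul_comm]⟩

theorem isScalarTower_base_of_smul_eq_mul (hsmul : ∀ (x : R) (a : A), x • a = ιR x * a) :
    IsScalarTower k R A :=
  ⟨fun c x a => by rw [hsmul, hsmul, map_smul, smul_mul_assoc]⟩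

end RingOverAlgebra

section SmashProduct

variable {k H R A : Type*} [CommRing k] [AddCommGroup H] [Module k H]
  [CommRing R] [Algebra k R] [Ring A] [Algebra k A] [Module R A]
  {n : H → ℕ} {Δ₁ Δ₂ : H → ℕ → H} {act : H →ₗ[k] R →ₗ[k] R} {ιR : R →ₐ[k] A} {ιH : H →ₗ[k] A}
  {DA : A →ₗ[R] A ⊗[R] A}

theorem smash_comul_ιH
    (hDA : ∀ (x : R) (h : H), DA (ιR x * ιH h)
      = ∑ i ∈ Finset.range (n h), (ιR x * ιH (Δ₁ h i)) ⊗ₜ[R] ιH (Δ₂ h i)) (h : H) :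
    DA (ιH h) = ∑ i ∈ Finset.range (n h), ιH (Δ₁ h i) ⊗ₜ[R] ιH (Δ₂ h i) := by
  simpa using hDA 1 h

variable [Coalgebra k H]

theorem smash_comul_ιH_mul_ιR [IsScalarTower R A A] [SMulCommClass R k A] [IsScalarTower k R A]
    (hrep : ∀ h : H, (Coalgebra.comul (R := k) h : H ⊗[k] H)
      = ∑ i ∈ Finset.range (n h), Δ₁ h i ⊗ₜ[k] Δ₂ h i)
    (hsmash : ∀ (h : H) (x : R),
      ιH h * ιR x = ∑ i ∈ Finset.range (n h), ιR (act (Δ₁ h i) x) * ιH (Δ₂ h i))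
    (hDA : ∀ (x : R) (h : H), DA (ιR x * ιH h)
      = ∑ i ∈ Finset.range (n h), (ιR x * ιH (Δ₁ h i)) ⊗ₜ[R] ιH (Δ₂ h i)) (h : H) (x : R) :
    DA (ιH h * ιR x) = (LinearMap.mulRight R (ιR x)).rTensor A (DA (ιH h)) := by
  let m : H ⊗[k] H →ₗ[k] A :=
    TensorProduct.lift ((LinearMap.mul k A).compl₁₂ (ιR.toLinearMap ∘ₗ act.flip x) ιH)
  let L : (H ⊗[k] H) ⊗[k] H →ₗ[k] A ⊗[R] A :=
    TensorProduct.mapOfCompatibleSMul R k k A A ∘ₗ TensorProduct.map m ιH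
  have hL : ∀ g₁ g₂ g₃ : H, L ((g₁ ⊗ₜ g₂) ⊗ₜ g₃) = (ιR (act g₁ x) * ιH g₂) ⊗ₜ ιH g₃ :=
    fun _ _ _ => rfl
  -- both sides of the claim are `L` applied to the two sides of coassociativity
  have hcoassoc := congrArg L (Coalgebra.coassoc_symm_apply (R := k) h)
  simp only [hrep, map_sum, LinearMap.lTensor_tmul, LinearMap.rTensor_tmul, TensorProduct.tmul_sum,
    TensorProduct.sum_tmul, TensorProduct.assoc_symm_tmul, hL] at hcoassoc
  rw [hsmash, map_sum, smash_comul_ιH hDA, map_sum]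
  simp only [hDA, LinearMap.rTensor_tmul, LinearMap.mulRight_apply, hsmash, TensorProduct.sum_tmul]
  exact hcoassoc

end SmashProduct

theorem smash_quotient_cocomm_implies_timesR_general
    {k : Type*} [Field k]
    {H : Type*} [Ring H] [Bialgebra k H]
    {R : Type*} [CommRing R] [Algebra k R]
    -- a chosen finite Sweedler representation of the comultiplication of `H`
    (n : H → ℕ) (Δ₁ Δ₂ : H → ℕ → H)
    (hrep : ∀ h : H, (Coalgebra.comul (R := k) h : H ⊗[k] H)
      = ∑ i ∈ Finset.range (n h), Δ₁ h i ⊗ₜ[k] Δ₂ h i)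
    -- `R` is a (commutative, nonzero) left `H`-module algebra
    (act : H →ₗ[k] R →ₗ[k] R)
    -- the smash product `A₀ = R#H`, as an `R`-ring via `ιR`
    {A₀ : Type*} [Ring A₀] [Algebra k A₀] [Module R A₀]
    (ιR : R →ₐ[k] A₀) (ιH : H →ₗ[k] A₀)
    (hsmul : ∀ (x : R) (a : A₀), x • a = ιR x * a)
    (hsmash : ∀ (h : H) (x : R),
      ιH h * ιR x = ∑ i ∈ Finset.range (n h), ιR (act (Δ₁ h i) x) * ιH (Δ₂ h i))
    -- the `R`-coalgebra structure of `R#H`, by base extension of `H`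
    (DA : A₀ →ₗ[R] TensorProduct R A₀ A₀)
    (hDA : ∀ (x : R) (h : H), DA (ιR x * ιH h)
      = ∑ i ∈ Finset.range (n h), (ιR x * ιH (Δ₁ h i)) ⊗ₜ[R] ιH (Δ₂ h i))
    -- `I` is a two-sided ideal of `R#H`
    (I : Set A₀)
    (hImul_right : ∀ (a : A₀), a ∈ I → ∀ b : A₀, a * b ∈ I)
    -- the quotient `A = R#H/I` is cocommutative as an `R`-coalgebra
    (hcocomm : ∀ a : A₀,
      DA a - (TensorProduct.comm R A₀ A₀) (DA a) ∈ tensorIdealSpan R A₀ I) :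
    ∀ (h : H) (x : R),
      (∑ i ∈ Finset.range (n h), (ιH (Δ₁ h i) * ιR x) ⊗ₜ[R] ιH (Δ₂ h i))
        - (∑ i ∈ Finset.range (n h), ιH (Δ₁ h i) ⊗ₜ[R] (ιH (Δ₂ h i) * ιR x))
        ∈ tensorIdealSpan R A₀ I := by
  intro h x
  have := isScalarTower_of_smul_eq_mul hsmul
  have := smulCommClass_of_smul_eq_mul hsmul
  have := isScalarTower_base_of_smul_eq_mul hsmul
  have hmem := rTensor_sub_lTensor_mem_of_sub_comm_mem DA hcocomm (LinearMap.mulRight R (ιR x))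
    (fun z hz => lTensor_mem_tensorIdealSpan _ (fun u hu => hImul_right u hu _) hz)
    (smash_comul_ιH_mul_ιR hrep hsmash hDA h x)
  simpa only [smash_comul_ιH hDA, map_sum, LinearMap.rTensor_tmul, LinearMap.lTensor_tmul,
    LinearMap.mulRight_apply] using hmem

/-- Let `H` be a bialgebra over a field `k`, `R` a commutative `H`-module algebra,
`I` an ideal and coideal of the smash product `R#H` (here an abstract ring `A₀`
with structure maps `ιR`, `ιH` and the smash relation
`h·x = Σ (h₁⇀x)·h₂`), and suppose the quotient `A = R#H/I` is cocommutative as an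
`R`-coalgebra.  Then for all `h ∈ H` and `x ∈ R`,
`Σ (1#h₁)x ⊗ (1#h₂) ≡ Σ (1#h₁) ⊗ (1#h₂)x` modulo `I⊗(R#H) + (R#H)⊗I` in
`(R#H) ⊗_R (R#H)`; i.e. `Δ(A) ⊆ A ×_R A`. -/
theorem smash_quotient_cocomm_implies_timesR
    {k : Type*} [Field k]
    {H : Type*} [Ring H] [Bialgebra k H]
    {R : Type*} [CommRing R] [Algebra k R]
    -- a chosen finite Sweedler representation of the comultiplication of `H`
    (n : H → ℕ) (Δ₁ Δ₂ : H → ℕ → H)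
    (hrep : ∀ h : H, (Coalgebra.comul (R := k) h : H ⊗[k] H)
      = ∑ i ∈ Finset.range (n h), Δ₁ h i ⊗ₜ[k] Δ₂ h i)
    -- `R` is a (commutative, nonzero) left `H`-module algebra
    (act : H →ₗ[k] R →ₗ[k] R)
    (hact_one : ∀ x : R, act 1 x = x)
    (hact_mul : ∀ (g h : H) (x : R), act (g * h) x = act g (act h x))
    (hma_one : ∀ h : H, act h 1 = Coalgebra.counit (R := k) h • (1 : R))
    (hma_mul : ∀ (h : H) (x y : R),
      act h (x * y) = ∑ i ∈ Finset.range (n h), act (Δ₁ h i) x * act (Δ₂ h i) y)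
    -- the smash product `A₀ = R#H`, as an `R`-ring via `ιR`
    {A₀ : Type*} [Ring A₀] [Algebra k A₀] [Module R A₀]
    (ιR : R →ₐ[k] A₀) (ιH : H →ₗ[k] A₀)
    (hsmul : ∀ (x : R) (a : A₀), x • a = ιR x * a)
    (hιH_one : ιH 1 = 1)
    (hιH_mul : ∀ g h : H, ιH (g * h) = ιH g * ιH h)
    (hsmash : ∀ (h : H) (x : R),
      ιH h * ιR x = ∑ i ∈ Finset.range (n h), ιR (act (Δ₁ h i) x) * ιH (Δ₂ h i))
    (hspan : ∀ a : A₀, a ∈ Submodule.span R (Set.range ιH))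
    -- the `R`-coalgebra structure of `R#H`, by base extension of `H`
    (DA : A₀ →ₗ[R] TensorProduct R A₀ A₀)
    (hDA : ∀ (x : R) (h : H), DA (ιR x * ιH h)
      = ∑ i ∈ Finset.range (n h), (ιR x * ιH (Δ₁ h i)) ⊗ₜ[R] ιH (Δ₂ h i))
    -- `I` is a two-sided ideal of `R#H`
    (I : Set A₀) (hI0 : (0 : A₀) ∈ I)
    (hIadd : ∀ a b : A₀, a ∈ I → b ∈ I → a + b ∈ I)
    (hIneg : ∀ a : A₀, a ∈ I → -a ∈ I)
    (hImul_left : ∀ (a : A₀), a ∈ I → ∀ b : A₀, b * a ∈ I)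
    (hImul_right : ∀ (a : A₀), a ∈ I → ∀ b : A₀, a * b ∈ I)
    -- ... and a coideal
    (hIcoideal : ∀ a ∈ I, DA a ∈ tensorIdealSpan R A₀ I)
    -- the quotient `A = R#H/I` is cocommutative as an `R`-coalgebra
    (hcocomm : ∀ a : A₀,
      DA a - (TensorProduct.comm R A₀ A₀) (DA a) ∈ tensorIdealSpan R A₀ I) :
    ∀ (h : H) (x : R),
      (∑ i ∈ Finset.range (n h), (ιH (Δ₁ h i) * ιR x) ⊗ₜ[R] ιH (Δ₂ h i))
        - (∑ i ∈ Finset.range (n h), ιH (Δ₁ h i) ⊗ₜ[R] (ιH (Δ₂ h i) * ιR x))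
        ∈ tensorIdealSpan R A₀ I :=
  smash_quotient_cocomm_implies_timesR_general n Δ₁ Δ₂ hrep act ιR ιH hsmul hsmash DA hDA I
    hImul_right hcocomm
end

section
/- Let R be a field and σ : R → R a k-algebra endomorphism with σ ≠ id. If δ : R → R is a k-linear map that is (id, σ)-twisted-derivation, i.e. δ(xy) = σ(x)δ(y) + δ(x)y for all x,y ∈ R, then there exists u ∈ R with δ = u·(σ - id). -/
/-- Let `R` be a field extension of `k` and `σ` a `k`-algebra endomorphism of `R`
with `σ ≠ id`.  If `δ : R → R` is a `k`-linear `(id, σ)`-twisted derivation,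
i.e. `δ(xy) = σ(x)δ(y) + δ(x)y`, then `δ = u·(σ - id)` for some `u ∈ R`. -/
theorem twisted_derivation_inner {k R : Type*} [Field k] [Field R] [Algebra k R]
    (σ : R →ₐ[k] R) (hσ : σ ≠ AlgHom.id k R)
    (δ : R →ₗ[k] R)
    (hδ : ∀ x y : R, δ (x * y) = σ x * δ y + δ x * y) :
    ∃ u : R, ∀ x : R, δ x = u * (σ x - x) := by
  obtain ⟨a, ha⟩ : ∃ a : R, σ a ≠ a := by
    by_contra h
    push_neg at h
    exact hσ (AlgHom.ext h)
  refine ⟨δ a / (σ a - a), fun x => ?_⟩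
  have key : σ a * δ x + δ a * x = σ x * δ a + δ x * a := by
    rw [← hδ, ← hδ, mul_comm]
  have h2 : δ x * (σ a - a) = δ a * (σ x - x) := by linear_combination key
  have hne : σ a - a ≠ 0 := sub_ne_zero.mpr ha
  field_simp
  linear_combination h2
end

section
/- Let D be a Hopf algebra over a field k and A a nonzero commutative D-module algebra that is simple (contains no nonzero proper D-stable ideal). Then the subalgebra of D-invariants A^D = {a ∈ A : d⇀a = ε(d)a for all d ∈ D} is a field. -/
/-- Let `D` be a Hopf algebra over a field `k` and `A` a nonzero commutative
`D`-module algebra that is simple (no nonzero proper `D`-stable ideal).  Then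
the subalgebra of `D`-invariants `A^D = {a | d⇀a = ε(d)a for all d}` is a
field: it contains `1`, is closed under the ring operations, and every nonzero
invariant has an invariant multiplicative inverse. -/
theorem invariants_isField {k D A : Type*} [Field k]
    [Ring D] [HopfAlgebra k D]
    [CommRing A] [Algebra k A] [Nontrivial A]
    -- a chosen finite Sweedler representation of the comultiplication of `D`
    (n : D → ℕ) (Δ₁ Δ₂ : D → ℕ → D)
    (hrep : ∀ d : D, (Coalgebra.comul (R := k) d : TensorProduct k D D)
      = ∑ i ∈ Finset.range (n d), Δ₁ d i ⊗ₜ[k] Δ₂ d i)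
    -- a left `D`-module algebra structure on `A`
    (act : D →ₗ[k] A →ₗ[k] A)
    (hact_one : ∀ a : A, act 1 a = a)
    (hact_mul : ∀ (d e : D) (a : A), act (d * e) a = act d (act e a))
    (hma_one : ∀ d : D, act d 1 = Coalgebra.counit (R := k) d • (1 : A))
    (hma_mul : ∀ (d : D) (x y : A),
      act d (x * y) = ∑ i ∈ Finset.range (n d), act (Δ₁ d i) x * act (Δ₂ d i) y)
    -- simplicity: the only `D`-stable ideals are `0` and `A`
    (hsimple : ∀ I : Ideal A, (∀ (d : D), ∀ a ∈ I, act d a ∈ I) → I = ⊥ ∨ I = ⊤) :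
    (1 : A) ∈ {a : A | ∀ d : D, act d a = Coalgebra.counit (R := k) d • a}
    ∧ (∀ a b, a ∈ {a : A | ∀ d : D, act d a = Coalgebra.counit (R := k) d • a} →
        b ∈ {a : A | ∀ d : D, act d a = Coalgebra.counit (R := k) d • a} →
        a + b ∈ {a : A | ∀ d : D, act d a = Coalgebra.counit (R := k) d • a}
        ∧ a * b ∈ {a : A | ∀ d : D, act d a = Coalgebra.counit (R := k) d • a})
    ∧ (∀ a, a ∈ {a : A | ∀ d : D, act d a = Coalgebra.counit (R := k) d • a} →
        -a ∈ {a : A | ∀ d : D, act d a = Coalgebra.counit (R := k) d • a})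
    ∧ (∀ a, a ∈ {a : A | ∀ d : D, act d a = Coalgebra.counit (R := k) d • a} →
        a ≠ 0 →
        ∃ b ∈ {a : A | ∀ d : D, act d a = Coalgebra.counit (R := k) d • a},
          a * b = 1) := by

  have key : ∀ d : D,
      (∑ i ∈ Finset.range (n d),
        Coalgebra.counit (R := k) (Δ₁ d i) • Δ₂ d i) = d := by
    intro d
    have h := Coalgebra.rTensor_counit_comul (R := k) d
    rw [hrep] at h
    have h2 := congrArg (TensorProduct.lid k D) h
    simpa [map_sum, TensorProduct.lid_tmul] using h2
  have hmul : ∀ (a : A),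
      (∀ d : D, act d a = Coalgebra.counit (R := k) d • a) →
      ∀ (d : D) (x : A), act d (a * x) = a * act d x := by
    intro a ha d x
    calc act d (a * x)
        = ∑ i ∈ Finset.range (n d), act (Δ₁ d i) a * act (Δ₂ d i) x :=
          hma_mul d a x
      _ = ∑ i ∈ Finset.range (n d),
            a * act (Coalgebra.counit (R := k) (Δ₁ d i) • Δ₂ d i) x := by
          refine Finset.sum_congr rfl fun i _ => ?_
          rw [ha, map_smul, LinearMap.smul_apply, smul_mul_assoc,
            mul_smul_comm]
      _ = a * act (∑ i ∈ Finset.range (n d),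
            Coalgebra.counit (R := k) (Δ₁ d i) • Δ₂ d i) x := by
          rw [← Finset.mul_sum]
          congr 1
          simp [map_sum, LinearMap.sum_apply]
      _ = a * act d x := by rw [key d]
  refine ⟨fun d => by simpa using hma_one d, ?_, ?_, ?_⟩
  · intro a b ha hb
    constructor
    · intro d
      rw [map_add, ha d, hb d, smul_add]
    · intro d
      rw [hmul a ha d b, hb d, mul_smul_comm]
  · intro a ha d
    rw [map_neg, ha d, smul_neg]
  · intro a ha hne
    set I : Ideal A := Ideal.span {a} with hI
    have hstable : ∀ (d : D), ∀ y ∈ I, act d y ∈ I := by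
      intro d y hy
      obtain ⟨c, rfl⟩ := Ideal.mem_span_singleton'.mp hy
      have : act d (c * a) = a * act d c := by
        rw [mul_comm]; exact hmul a ha d c
      rw [this]
      exact Ideal.mem_span_singleton'.mpr ⟨act d c, mul_comm _ _⟩
    rcases hsimple I hstable with hbot | htop
    · exfalso
      have : a ∈ I := Ideal.mem_span_singleton_self a
      rw [hbot] at this
      exact hne (by simpa using this)
    · have h1 : (1 : A) ∈ I := by rw [htop]; trivial
      obtain ⟨b, hb⟩ := Ideal.mem_span_singleton'.mp h1
      have hab : a * b = 1 := by rw [mul_comm]; exact hb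
      refine ⟨b, ?_, hab⟩
      intro d
      have h2 : a * act d b = Coalgebra.counit (R := k) d • (1 : A) := by
        rw [← hmul a ha d b, hab, hma_one]
      calc act d b = (b * a) * act d b := by rw [mul_comm b a, hab, one_mul]
        _ = b * (a * act d b) := by ring
        _ = Coalgebra.counit (R := k) d • b := by
            rw [h2, mul_smul_comm, mul_one]
end

section
/- Let R be a commutative ring, S ⊆ R a multiplicative set, and suppose R carries an iterative q-difference structure (σ_q, δ^{(k)}) such that σ_q(s) is invertible in S⁻¹R for every s ∈ S. Then S⁻¹R admits a unique iterative q-difference structure such that the localization map R → S⁻¹R commutes with σ_q and all δ^{(k)}. -/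
/-!
The maps `x ↦ σⁿ(δₖ x)` assemble into a ring homomorphism from `R` to a ring of double sequences
whose product is dictated by the twisted Leibniz rule. In that ring a sequence is invertible as
soon as its entries `(n, 0)` are, so the homomorphism extends uniquely to `S⁻¹R`, and its row
`n = 0` gives the extended operators. The extension of `σ` is an automorphism because `σ^N = 1`:
`σ - qᵏ` maps `tᵏ δₖ x` to a multiple of `tᵏ⁺¹ δₖ₊₁ x`, a multiple that vanishes for `k = N - 1`,
so `σ^N - 1 = ∏_{k<N} (σ - qᵏ)` kills `R`.

The remaining axioms pass from `R` to `S⁻¹R` through one induction on `M`: if `F` vanishes on `R`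
and, for `s ∈ S`, `u ↦ F (s u) - σ^M(s) F u` lies in the `S⁻¹R`-span of the `δᵢ` with `i < M`,
then that combination vanishes on `R` too, hence everywhere, and `F (a / s) = 0` follows because
`σ^M(s)` is a unit.
-/

open Finset Polynomial

lemma sub_one_mul_qBinom_one {K : Type*} [CommRing K] (q : K) (n : ℕ) :
    (q - 1) * qBinom q n 1 = q ^ n - 1 := by
  induction n with
  | zero => simp [qBinom]
  | succ n ih =>
    have h0 : qBinom q n 0 = 1 := by cases n <;> rfl
    rw [qBinom, h0, zero_add, pow_one]
    linear_combination q * ih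

section QDifference

variable {C R : Type*} [Field C] [CommRing R] [Algebra C R] {q : C} {t : Rˣ} {σ : R →ₐ[C] R}
  {δ : ℕ → R → R}

lemma apply_eq_add_delta_one (hq : q ≠ 1)
    (h1 : ∀ x, δ 1 x = algebraMap C R (q - 1)⁻¹ * (↑t⁻¹ : R) * (σ x - x)) (x : R) :
    σ x = x + algebraMap C R (q - 1) * t * δ 1 x := by
  have hq' : algebraMap C R (q - 1) * algebraMap C R (q - 1)⁻¹ = 1 := by
    rw [← map_mul, mul_inv_cancel₀ (sub_ne_zero.mpr hq), map_one]
  rw [h1, show ∀ a a' u u' y : R, a * u * (a' * u' * y) = a * a' * (u * u') * y by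
    intros; ring, hq', t.mul_inv]
  ring

lemma apply_pow_mul_delta_sub (hq : q ≠ 1) (hσt : σ t = algebraMap C R q * t)
    (h1 : ∀ x, δ 1 x = algebraMap C R (q - 1)⁻¹ * (↑t⁻¹ : R) * (σ x - x))
    (hiter : ∀ i j x, δ i (δ j x) = algebraMap C R (qBinom q (i + j) i) * δ (i + j) x)
    (k : ℕ) (x : R) :
    σ ((t : R) ^ k * δ k x) - algebraMap C R (q ^ k) * ((t : R) ^ k * δ k x)
      = algebraMap C R (q ^ k * (q ^ (k + 1) - 1)) * ((t : R) ^ (k + 1) * δ (k + 1) x) := by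
  have hb := congrArg (algebraMap C R) (sub_one_mul_qBinom_one q (k + 1))
  simp only [map_mul, map_sub, map_pow, map_one] at hb ⊢
  rw [hσt, apply_eq_add_delta_one hq h1, hiter, add_comm 1 k, map_sub, map_one]
  linear_combination (algebraMap C R q) ^ k * (t : R) ^ (k + 1) * δ (k + 1) x * hb

lemma exists_aeval_prod_X_sub_C_eq (hq : q ≠ 1) (hσt : σ t = algebraMap C R q * t)
    (h0 : ∀ x, δ 0 x = x)
    (h1 : ∀ x, δ 1 x = algebraMap C R (q - 1)⁻¹ * (↑t⁻¹ : R) * (σ x - x))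
    (hiter : ∀ i j x, δ i (δ j x) = algebraMap C R (qBinom q (i + j) i) * δ (i + j) x)
    (x : R) (k : ℕ) :
    ∃ c : C, aeval σ.toLinearMap (∏ i ∈ range k, (X - Polynomial.C (q ^ i))) x
      = algebraMap C R c * ((t : R) ^ k * δ k x) := by
  induction k with
  | zero => exact ⟨1, by simp [h0]⟩
  | succ k ih =>
    obtain ⟨c, hc⟩ := ih
    refine ⟨c * (q ^ k * (q ^ (k + 1) - 1)), ?_⟩
    rw [prod_range_succ_comm, map_mul, Module.End.mul_apply, hc]
    simp only [map_sub, aeval_X, aeval_C, LinearMap.sub_apply, Module.algebraMap_end_apply,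
      Algebra.smul_def]
    have step := apply_pow_mul_delta_sub hq hσt h1 hiter k x
    change σ _ - _ = _
    rw [map_mul, AlgHom.commutes, map_mul (algebraMap C R) c]
    linear_combination algebraMap C R c * step

theorem iterate_eq_self_of_isPrimitiveRoot {N : ℕ} (hN : 1 < N) (hq : IsPrimitiveRoot q N)
    (hσt : σ t = algebraMap C R q * t)
    (h0 : ∀ x, δ 0 x = x)
    (h1 : ∀ x, δ 1 x = algebraMap C R (q - 1)⁻¹ * (↑t⁻¹ : R) * (σ x - x))
    (hiter : ∀ i j x, δ i (δ j x) = algebraMap C R (qBinom q (i + j) i) * δ (i + j) x)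
    (x : R) : σ^[N] x = x := by
  have hq1 : q ≠ 1 := hq.ne_one hN
  obtain ⟨M, rfl⟩ : ∃ M, N = M + 1 := ⟨N - 1, by omega⟩
  obtain ⟨c, hc⟩ := exists_aeval_prod_X_sub_C_eq hq1 hσt h0 h1 hiter x M
  have hroots := X_pow_sub_C_eq_prod hq (Nat.succ_pos M) (one_pow (M + 1))
  simp only [mul_one] at hroots
  rw [prod_range_succ_comm] at hroots
  have key := congrArg (fun p => aeval σ.toLinearMap p x) hroots
  simp only [map_mul, Module.End.mul_apply] at key
  rw [hc] at key
  simp only [map_sub, aeval_X_pow, aeval_X, aeval_C, map_one, LinearMap.sub_apply,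
    Module.End.one_apply, Module.End.pow_apply, Module.algebraMap_end_apply,
    Algebra.smul_def] at key
  change σ^[M + 1] x - x = σ _ - _ at key
  have step := apply_pow_mul_delta_sub hq1 hσt h1 hiter M x
  rw [hq.pow_eq_one, sub_self, mul_zero, map_zero, zero_mul] at step
  rw [map_mul, AlgHom.commutes] at key
  linear_combination key + algebraMap C R c * step

end QDifference

/-- `f n k` stands for `σⁿ ∘ δₖ` applied to an element; the product below is the twisted Leibniz
rule, so that `x ↦ (σⁿ (δₖ x))ₙ,ₖ` is multiplicative. -/
def TwistedJet (A : Type*) := ℕ → ℕ → A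

namespace TwistedJet

@[ext] lemma ext {A : Type*} {f g : TwistedJet A} (h : ∀ n k, f n k = g n k) : f = g :=
  funext fun n => funext (h n)

section Ring

variable {A : Type*} [Ring A]

instance : AddCommGroup (TwistedJet A) := inferInstanceAs (AddCommGroup (ℕ → ℕ → A))

instance : Mul (TwistedJet A) :=
  ⟨fun f g n k => ∑ i ∈ range (k + 1), f (n + i) (k - i) * g n i⟩

instance : One (TwistedJet A) := ⟨fun _ k => if k = 0 then 1 else 0⟩

lemma mul_apply (f g : TwistedJet A) (n k : ℕ) :
    (f * g) n k = ∑ i ∈ range (k + 1), f (n + i) (k - i) * g n i := rfl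

lemma one_apply (n k : ℕ) : (1 : TwistedJet A) n k = if k = 0 then 1 else 0 := rfl

lemma add_apply (f g : TwistedJet A) (n k : ℕ) : (f + g) n k = f n k + g n k := rfl

lemma zero_apply (n k : ℕ) : (0 : TwistedJet A) n k = 0 := rfl

lemma mul_apply_zero (f g : TwistedJet A) (n : ℕ) : (f * g) n 0 = f n 0 * g n 0 := by
  simp [mul_apply]

protected lemma mul_assoc (f g h : TwistedJet A) : f * g * h = f * (g * h) := by
  ext n k
  simp only [mul_apply, sum_mul, mul_sum]
  symm
  rw [sum_comm' (t' := range (k + 1)) (s' := fun i => Ico i (k + 1))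
    (fun a i => by simp only [mem_range, mem_Ico]; omega)]
  refine sum_congr rfl fun i hi => ?_
  have hi : i < k + 1 := mem_range.mp hi
  rw [sum_Ico_eq_sum_range, show k + 1 - i = k - i + 1 by omega]
  refine sum_congr rfl fun j _ => ?_
  rw [← mul_assoc, Nat.add_sub_cancel_left, Nat.sub_sub, add_assoc]

protected lemma one_mul (f : TwistedJet A) : 1 * f = f := by
  ext n k
  rw [mul_apply, sum_eq_single_of_mem k (self_mem_range_succ k) fun i hi hik => ?_]
  · simp [one_apply]
  · have : k - i ≠ 0 := by have := mem_range.mp hi; omega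
    simp [one_apply, this]

protected lemma mul_one (f : TwistedJet A) : f * 1 = f := by
  ext n k
  rw [mul_apply, sum_eq_single_of_mem 0 (by simp) fun i _ hi => by simp [one_apply, hi]]
  simp [one_apply]

instance : Ring (TwistedJet A) where
  mul_assoc := TwistedJet.mul_assoc
  one_mul := TwistedJet.one_mul
  mul_one := TwistedJet.mul_one
  left_distrib f g h := by ext n k; simp [mul_apply, add_apply, mul_add, sum_add_distrib]
  right_distrib f g h := by ext n k; simp [mul_apply, add_apply, add_mul, sum_add_distrib]
  zero_mul f := by ext n k; simp [mul_apply, zero_apply]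
  mul_zero f := by ext n k; simp [mul_apply, zero_apply]

noncomputable def rightInvColumn (f : TwistedJet A) (n : ℕ) : ℕ → A
  | 0 => Ring.inverse (f n 0)
  | k + 1 => -(Ring.inverse (f (n + (k + 1)) 0) *
      ∑ i ∈ (range (k + 1)).attach, f (n + i) (k + 1 - i) * rightInvColumn f n i)
  decreasing_by exact mem_range.mp i.2

noncomputable def rightInv (f : TwistedJet A) : TwistedJet A := fun n k => rightInvColumn f n k

lemma rightInv_apply_zero (f : TwistedJet A) (n : ℕ) : rightInv f n 0 = Ring.inverse (f n 0) := by
  simp [rightInv, rightInvColumn]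

lemma mul_rightInv {f : TwistedJet A} (hf : ∀ n, IsUnit (f n 0)) : f * rightInv f = 1 := by
  ext n k
  cases k with
  | zero => simp [mul_apply, one_apply, rightInv_apply_zero, Ring.mul_inverse_cancel _ (hf n)]
  | succ k =>
    rw [mul_apply, sum_range_succ, Nat.sub_self, one_apply, if_neg k.succ_ne_zero]
    simp only [rightInv, rightInvColumn, sum_attach (range (k + 1))
      (fun i => f (n + i) (k + 1 - i) * rightInvColumn f n i), mul_neg, ← mul_assoc,
      Ring.mul_inverse_cancel _ (hf _), one_mul, add_neg_cancel]

lemma isUnit_of_forall_isUnit_apply_zero {f : TwistedJet A} (hf : ∀ n, IsUnit (f n 0)) :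
    IsUnit f := by
  have hg : ∀ n, IsUnit (rightInv f n 0) := fun n => by
    rw [rightInv_apply_zero]; exact (hf n).ringInverse
  have hfg := mul_rightInv hf
  -- a right inverse of `rightInv f` exists as well, and then it must be `f`
  have hgf : rightInv f * f = 1 := by
    have key : f = rightInv (rightInv f) := calc
      f = f * (rightInv f * rightInv (rightInv f)) := by rw [mul_rightInv hg, mul_one]
      _ = rightInv (rightInv f) := by rw [← mul_assoc, hfg, one_mul]
    simpa only [← key] using mul_rightInv hg
  exact ⟨⟨f, rightInv f, hfg, hgf⟩, rfl⟩

def map {B : Type*} [Ring B] (φ : A →+* B) : TwistedJet A →+* TwistedJet B where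
  toFun f n k := φ (f n k)
  map_one' := by ext n k; simp [one_apply, apply_ite φ]
  map_mul' f g := by ext n k; simp only [mul_apply, map_sum, map_mul]; rfl
  map_zero' := by ext n k; simp [zero_apply]
  map_add' f g := by ext n k; exact map_add φ _ _

lemma map_apply {B : Type*} [Ring B] (φ : A →+* B) (f : TwistedJet A) (n k : ℕ) :
    map φ f n k = φ (f n k) := rfl

def shift : TwistedJet A →+* TwistedJet A where
  toFun f n k := f (n + 1) k
  map_one' := rfl
  map_mul' f g := by ext n k; simp only [mul_apply, add_right_comm n 1]; rfl
  map_zero' := rfl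
  map_add' f g := rfl

lemma shift_apply (f : TwistedJet A) (n k : ℕ) : shift f n k = f (n + 1) k := rfl

def constCoeff : TwistedJet A →+* A where
  toFun f := f 0 0
  map_one' := rfl
  map_mul' f g := mul_apply_zero f g 0
  map_zero' := rfl
  map_add' _ _ := rfl

lemma constCoeff_apply (f : TwistedJet A) : constCoeff f = f 0 0 := rfl

end Ring

end TwistedJet

section HigherDerivation

variable {A : Type*} [CommRing A]

structure IsHigherSigmaDerivation (σ : A →+* A) (δ : ℕ → A → A) : Prop where
  order_zero : ∀ x, δ 0 x = x
  additive : ∀ k x y, δ k (x + y) = δ k x + δ k y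
  leibniz : ∀ k x y, δ k (x * y) = ∑ i ∈ range (k + 1), σ^[i] (δ (k - i) x) * δ i y

namespace IsHigherSigmaDerivation

variable {σ : A →+* A} {δ : ℕ → A → A}

def jet (σ : A →+* A) (δ : ℕ → A → A) (x : A) : TwistedJet A := fun n k => σ^[n] (δ k x)

lemma jet_apply (x : A) (n k : ℕ) : jet σ δ x n k = σ^[n] (δ k x) := rfl

lemma jet_mul (h : IsHigherSigmaDerivation σ δ) (x y : A) :
    jet σ δ (x * y) = jet σ δ x * jet σ δ y := by
  ext n k
  simp only [jet_apply, TwistedJet.mul_apply, h.leibniz, ← RingHom.coe_pow, map_sum, map_mul,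
    pow_add]
  rfl

def jetHom (h : IsHigherSigmaDerivation σ δ) : A →+* TwistedJet A where
  toFun := jet σ δ
  map_mul' := h.jet_mul
  map_one' := by
    have hunit : IsUnit (jet σ δ 1) :=
      TwistedJet.isUnit_of_forall_isUnit_apply_zero fun n => by
        rw [jet_apply, h.order_zero, ← RingHom.coe_pow, map_one]
        exact isUnit_one
    exact hunit.mul_eq_left.mp (by rw [← h.jet_mul, one_mul])
  map_zero' := by
    ext n k
    have h0 : δ k 0 = 0 := by simpa using h.additive k 0 0
    simp [jet_apply, h0, TwistedJet.zero_apply]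
  map_add' x y := by
    ext n k
    simp only [TwistedJet.add_apply, jet_apply, h.additive, ← RingHom.coe_pow, map_add]

lemma jetHom_apply (h : IsHigherSigmaDerivation σ δ) (x : A) (n k : ℕ) :
    h.jetHom x n k = σ^[n] (δ k x) := rfl

lemma apply_sum (h : IsHigherSigmaDerivation σ δ) (k : ℕ) {ι : Type*} (s : Finset ι)
    (f : ι → A) : δ k (∑ x ∈ s, f x) = ∑ x ∈ s, δ k (f x) :=
  map_sum (AddMonoidHom.mk' (δ k) (h.additive k)) f s

end IsHigherSigmaDerivation

end HigherDerivation

section LowerOrder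

variable {A : Type*} [CommRing A] {σ : A →+* A} {d : ℕ → A → A}

def lowerOrderOps (d : ℕ → A → A) (M : ℕ) : Submodule A (A → A) :=
  Submodule.span A (d '' Set.Iio M)

lemma mem_lowerOrderOps {M B : ℕ} (hB : B < M) : d B ∈ lowerOrderOps d M :=
  Submodule.subset_span ⟨B, hB, rfl⟩

def twistComm (σ : A →+* A) (w : A) (M : ℕ) : (A → A) →ₗ[A] (A → A) where
  toFun F u := F (w * u) - σ^[M] w * F u
  map_add' F G := by ext u; simp only [Pi.add_apply]; ring
  map_smul' c F := by ext u; simp only [Pi.smul_apply, smul_eq_mul, RingHom.id_apply]; ring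

lemma twistComm_apply (w : A) (M : ℕ) (F : A → A) (u : A) :
    twistComm σ w M F u = F (w * u) - σ^[M] w * F u := rfl

namespace IsHigherSigmaDerivation

lemma twistComm_mem (h : IsHigherSigmaDerivation σ d) (w : A) {B M : ℕ} (hBM : B ≤ M) :
    twistComm σ w M (d B) ∈ lowerOrderOps d M := by
  have hexp : twistComm σ w M (d B)
      = ∑ β ∈ range B, σ^[β] (d (B - β) w) • d β + (σ^[B] w - σ^[M] w) • d B := by
    ext u
    simp only [twistComm_apply, h.leibniz, sum_range_succ, Nat.sub_self, h.order_zero,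
      Pi.add_apply, Finset.sum_apply, Pi.smul_apply, smul_eq_mul]
    ring
  rw [hexp]
  refine add_mem (sum_mem fun β hβ => Submodule.smul_mem _ _ (mem_lowerOrderOps (by
    have := mem_range.mp hβ; omega))) ?_
  rcases hBM.lt_or_eq with hlt | rfl
  · exact Submodule.smul_mem _ _ (mem_lowerOrderOps hlt)
  · simp

lemma lowerOrderOps_le_comap (h : IsHigherSigmaDerivation σ d) (w : A) (M : ℕ) :
    lowerOrderOps d (M + 1) ≤ (lowerOrderOps d M).comap (twistComm σ w M) :=
  Submodule.span_le.mpr <| by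
    rintro _ ⟨B, hB, rfl⟩
    exact h.twistComm_mem w (Nat.lt_succ_iff.mp hB)

lemma twistComm_comp_mem (h : IsHigherSigmaDerivation σ d) (c : ℕ → ℕ → A) {i j : ℕ}
    (hlow : ∀ e b, e + b < i + j → (fun u => d e (d b u)) = c (e + b) e • d (e + b)) (w : A) :
    twistComm σ w (i + j) ((fun u => d i (d j u)) - c (i + j) i • d (i + j))
      ∈ lowerOrderOps d (i + j) := by
  rw [map_sub, map_smul]
  refine sub_mem ?_ (Submodule.smul_mem _ _ (h.twistComm_mem w le_rfl))
  set P := range (j + 1) ×ˢ range (i + 1)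
  have hji : (j, i) ∈ P := by simp [P]
  have hexp : twistComm σ w (i + j) (fun u => d i (d j u))
      = ∑ p ∈ P.erase (j, i),
          σ^[p.2] (d (i - p.2) (σ^[p.1] (d (j - p.1) w))) • fun u => d p.2 (d p.1 u) := by
    ext u
    rw [twistComm_apply, h.leibniz, h.apply_sum]
    simp only [h.leibniz, Finset.sum_apply, Pi.smul_apply, smul_eq_mul]
    rw [← sum_product' (f := fun b e => σ^[e] (d (i - e) (σ^[b] (d (j - b) w))) * d e (d b u)),
      ← add_sum_erase P _ hji]
    simp only [Nat.sub_self, h.order_zero, ← Function.iterate_add_apply]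
    ring
  rw [hexp]
  refine sum_mem fun p hp => Submodule.smul_mem _ _ ?_
  obtain ⟨hne, hp⟩ := mem_erase.mp hp
  simp only [P, mem_product, mem_range] at hp
  have hlt : p.2 + p.1 < i + j := by
    rcases p with ⟨b, e⟩
    simp only [ne_eq, Prod.mk.injEq] at hne hp ⊢
    omega
  rw [hlow _ _ hlt]
  exact Submodule.smul_mem _ _ (mem_lowerOrderOps hlt)

end IsHigherSigmaDerivation

end LowerOrder

section Localization

variable {R : Type*} [CommRing R] {L : Type*} [CommRing L] [Algebra R L]

lemma eq_zero_of_twistComm_eq_zero (S : Submonoid R) [IsLocalization S L] {F : L → L}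
    (σ : L →+* L) (M : ℕ) (hR : ∀ x : R, F (algebraMap R L x) = 0)
    (htw : ∀ s ∈ S, twistComm σ (algebraMap R L s) M F = 0) : F = 0 := by
  ext z
  obtain ⟨⟨a, s⟩, hz⟩ := IsLocalization.surj S z
  have hu : IsUnit ((σ ^ M) (algebraMap R L s)) := (IsLocalization.map_units L s).map _
  have hs := congrFun (htw s s.2) z
  rw [twistComm_apply, ← RingHom.coe_pow, mul_comm, hz, hR, Pi.zero_apply, zero_sub,
    neg_eq_zero] at hs
  exact (hu.mul_right_eq_zero).mp hs

lemma twistComm_algebraMap {σ : L →+* L} {F : L → L} (hR : ∀ x : R, F (algebraMap R L x) = 0)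
    (M : ℕ) (w x : R) : twistComm σ (algebraMap R L w) M F (algebraMap R L x) = 0 := by
  rw [twistComm_apply, ← map_mul, hR, hR, mul_zero, sub_zero]

namespace IsHigherSigmaDerivation

variable {σ : L →+* L} {d : ℕ → L → L}

theorem eq_zero_of_mem_lowerOrderOps (S : Submonoid R) [IsLocalization S L]
    (h : IsHigherSigmaDerivation σ d) :
    ∀ {M : ℕ} {F : L → L}, F ∈ lowerOrderOps d M →
      (∀ x : R, F (algebraMap R L x) = 0) → F = 0
  | 0, F, hF, _ => by simpa [lowerOrderOps] using hF
  | M + 1, F, hF, hR => eq_zero_of_twistComm_eq_zero S σ M hR fun s _ =>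
      h.eq_zero_of_mem_lowerOrderOps S (h.lowerOrderOps_le_comap _ M hF)
        (twistComm_algebraMap hR M s)

theorem comp_eq_of_algebraMap (S : Submonoid R) [IsLocalization S L]
    (h : IsHigherSigmaDerivation σ d) (c : ℕ → ℕ → L)
    (hR : ∀ i j x, d i (d j (algebraMap R L x)) = c (i + j) i * d (i + j) (algebraMap R L x))
    (i j : ℕ) (z : L) : d i (d j z) = c (i + j) i * d (i + j) z := by
  suffices H : ∀ n i j, i + j = n → (fun u => d i (d j u)) = c (i + j) i • d (i + j) from
    congrFun (H _ i j rfl) z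
  intro n
  induction n using Nat.strong_induction_on with
  | _ n ih =>
    rintro i j rfl
    have hER : ∀ x : R,
        ((fun u => d i (d j u)) - c (i + j) i • d (i + j)) (algebraMap R L x) = 0 :=
      fun x => by simp [hR]
    rw [← sub_eq_zero]
    refine eq_zero_of_twistComm_eq_zero S σ (i + j) hER fun s _ => ?_
    exact h.eq_zero_of_mem_lowerOrderOps S
      (h.twistComm_comp_mem c (fun e b hlt => ih _ hlt e b rfl) _)
      (twistComm_algebraMap hER _ s)

theorem delta_one_eq_of_algebraMap (S : Submonoid R) [IsLocalization S L]
    (h : IsHigherSigmaDerivation σ d) (a : L)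
    (hR : ∀ x : R, d 1 (algebraMap R L x) = a * (σ (algebraMap R L x) - algebraMap R L x))
    (z : L) : d 1 z = a * (σ z - z) := by
  suffices H : (fun z => d 1 z - a * (σ z - z)) = 0 from sub_eq_zero.mp (congrFun H z)
  refine eq_zero_of_twistComm_eq_zero S σ 1 (fun x => sub_eq_zero.mpr (hR x)) fun s _ => ?_
  ext u
  have hs := hR s
  simp only [twistComm_apply, h.leibniz, sum_range_succ, sum_range_zero, h.order_zero,
    Function.iterate_zero_apply, Function.iterate_one, map_mul, Pi.zero_apply]
  linear_combination u * hs

theorem eq_of_algebraMap (S : Submonoid R) [IsLocalization S L] {d' : ℕ → L → L}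
    (h : IsHigherSigmaDerivation σ d) (h' : IsHigherSigmaDerivation σ d')
    (hR : ∀ k x, d k (algebraMap R L x) = d' k (algebraMap R L x)) : d = d' := by
  have hjet : h.jetHom = h'.jetHom := IsLocalization.ringHom_ext S <| RingHom.ext fun x => by
    ext n k
    simp only [RingHom.comp_apply, jetHom_apply, hR]
  ext k z
  simpa only [jetHom_apply, Function.iterate_zero_apply] using
    congrArg (fun f : TwistedJet L => f 0 k) (congrArg (· z) hjet)

end IsHigherSigmaDerivation

end Localization

section Extension

def RingHom.ringEquivOfPowEqOne {A : Type*} [Semiring A] (f : A →+* A) {N : ℕ} (hN : 0 < N)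
    (hf : f ^ N = 1) : A ≃+* A :=
  RingEquiv.ofRingHom f (f ^ (N - 1))
    (by rw [← RingHom.mul_def, ← pow_succ', Nat.sub_add_cancel hN, hf]; rfl)
    (by rw [← RingHom.mul_def, ← pow_succ, Nat.sub_add_cancel hN, hf]; rfl)

variable {R : Type*} [CommRing R] {S : Submonoid R}

noncomputable def localizationEndo (σ : R →+* R)
    (hS : ∀ s ∈ S, IsUnit (algebraMap R (Localization S) (σ s))) :
    Localization S →+* Localization S :=
  IsLocalization.lift (g := (algebraMap R _).comp σ) fun s => hS s s.2

lemma localizationEndo_algebraMap {σ : R →+* R}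
    (hS : ∀ s ∈ S, IsUnit (algebraMap R (Localization S) (σ s))) (x : R) :
    localizationEndo σ hS (algebraMap R _ x) = algebraMap R _ (σ x) :=
  IsLocalization.lift_eq _ x

lemma localizationEndo_pow_eq_one {σ : R →+* R}
    (hS : ∀ s ∈ S, IsUnit (algebraMap R (Localization S) (σ s))) {N : ℕ}
    (hN : ∀ x, σ^[N] x = x) : localizationEndo σ hS ^ N = 1 :=
  IsLocalization.ringHom_ext S <| RingHom.ext fun x => by
    have := (Function.Semiconj.iterate_right (fun y => (localizationEndo_algebraMap hS y).symm) N) x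
    simp only [RingHom.comp_apply, RingHom.coe_pow, ← this, hN]
    rfl

lemma isUnit_algebraMap_iterate {σ : R →+* R} {σL : Localization S →+* Localization S}
    (hσL : ∀ x, σL (algebraMap R _ x) = algebraMap R _ (σ x)) {s : R} (hs : s ∈ S)
    (n : ℕ) :
    IsUnit (algebraMap R (Localization S) (σ^[n] s)) := by
  rw [(Function.Semiconj.iterate_right (fun y => (hσL y).symm) n) s, ← RingHom.coe_pow]
  exact (IsLocalization.map_units _ (⟨s, hs⟩ : S)).map _

namespace IsHigherSigmaDerivation

variable {σ : R →+* R} {δ : ℕ → R → R} (h : IsHigherSigmaDerivation σ δ)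
  (σL : Localization S →+* Localization S)
  (hσL : ∀ x, σL (algebraMap R _ x) = algebraMap R _ (σ x))

noncomputable def localizationJet : Localization S →+* TwistedJet (Localization S) :=
  let θ := (TwistedJet.map (algebraMap R (Localization S))).comp h.jetHom
  OreLocalization.universalHom θ
    (IsUnit.liftRight (θ.toMonoidHom.comp S.subtype) fun s =>
      TwistedJet.isUnit_of_forall_isUnit_apply_zero fun n => by
        change IsUnit (algebraMap R _ (σ^[n] (δ 0 s)))
        rw [h.order_zero]
        exact isUnit_algebraMap_iterate hσL s.2 n)
    fun s => by rw [IsUnit.coe_liftRight]; rfl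

lemma localizationJet_algebraMap (x : R) :
    h.localizationJet σL hσL (algebraMap R _ x) = TwistedJet.map (algebraMap R _) (h.jetHom x) :=
  OreLocalization.universalHom_commutes _ _ _

lemma localizationJet_apply (z : Localization S) (n k : ℕ) :
    h.localizationJet σL hσL z n k = σL^[n] (h.localizationJet σL hσL z 0 k) := by
  have hshift : TwistedJet.shift.comp (h.localizationJet σL hσL)
      = (TwistedJet.map σL).comp (h.localizationJet σL hσL) :=
    IsLocalization.ringHom_ext S <| RingHom.ext fun x => by
      ext n k
      simp only [RingHom.comp_apply, localizationJet_algebraMap, TwistedJet.shift_apply,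
        TwistedJet.map_apply, jetHom_apply, Function.iterate_succ_apply', hσL]
  induction n with
  | zero => rfl
  | succ n ih =>
    rw [← TwistedJet.shift_apply (h.localizationJet σL hσL z), ← RingHom.comp_apply, hshift,
      RingHom.comp_apply, TwistedJet.map_apply, ih, Function.iterate_succ_apply']

noncomputable def localize (k : ℕ) (z : Localization S) : Localization S :=
  h.localizationJet σL hσL z 0 k

lemma localize_algebraMap (k : ℕ) (x : R) :
    h.localize σL hσL k (algebraMap R _ x) = algebraMap R _ (δ k x) := by
  rw [localize, localizationJet_algebraMap]
  rfl

theorem isHigherSigmaDerivation_localize : IsHigherSigmaDerivation σL (h.localize σL hσL) where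
  order_zero z := by
    have hid : TwistedJet.constCoeff.comp (h.localizationJet σL hσL) = RingHom.id _ :=
      IsLocalization.ringHom_ext S <| RingHom.ext fun x => by
        simp only [RingHom.comp_apply, TwistedJet.constCoeff_apply, localizationJet_algebraMap,
          TwistedJet.map_apply, jetHom_apply, h.order_zero]
        rfl
    exact congrArg (· z) hid
  additive k z w := by simp only [localize, map_add]; rfl
  leibniz k z w := by
    simp only [localize, map_mul, TwistedJet.mul_apply, zero_add]
    exact sum_congr rfl fun i _ => by rw [localizationJet_apply]

end IsHigherSigmaDerivation

end Extension

/-- Let `R` be an iterative q-difference ring (axioms (1)–(5) of Hardouin's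
Definition 2.4, relative to `σ_q` and an invertible `t`), and `S ⊆ R` a
multiplicative set such that `σ_q(s)` becomes invertible in `S⁻¹R` for every
`s ∈ S`.  Then `S⁻¹R` carries a unique iterative q-difference structure
`(σ', δ'^(k))` such that the localization map commutes with `σ_q` and all the
`δ^(k)`. -/
theorem iterQDiff_localization {C R : Type*} [Field C] [CommRing R] [Algebra C R]
    (q : C) (N : ℕ) (hN : 1 < N) (hq : IsPrimitiveRoot q N)
    (t : Rˣ) (σ : R ≃+* R)
    (hσC : ∀ c : C, σ (algebraMap C R c) = algebraMap C R c)
    (hσt : σ (t : R) = algebraMap C R q * t)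
    (δ : ℕ → R → R)
    (h0 : ∀ x, δ 0 x = x)
    (h1 : ∀ x, δ 1 x = algebraMap C R (q - 1)⁻¹ * (↑t⁻¹ : R) * (σ x - x))
    (hadd : ∀ k x y, δ k (x + y) = δ k x + δ k y)
    (hleib : ∀ k x y, δ k (x * y)
      = ∑ i ∈ Finset.range (k + 1), (⇑σ)^[i] (δ (k - i) x) * δ i y)
    (hiter : ∀ i j x, δ i (δ j x) = algebraMap C R (qBinom q (i + j) i) * δ (i + j) x)
    (S : Submonoid R)
    (hS : ∀ s ∈ S, IsUnit (algebraMap R (Localization S) (σ s))) :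
    ∃! σδ : (Localization S ≃+* Localization S) × (ℕ → Localization S → Localization S),
      -- the localization map `R → S⁻¹R` commutes with the structures
      (∀ x : R, σδ.1 (algebraMap R (Localization S) x)
          = algebraMap R (Localization S) (σ x))
      ∧ (∀ (k : ℕ) (x : R), σδ.2 k (algebraMap R (Localization S) x)
          = algebraMap R (Localization S) (δ k x))
      -- and `(σ', δ')` is an iterative q-difference structure on `S⁻¹R`
      ∧ (∀ x, σδ.2 0 x = x)
      ∧ (∀ x, σδ.2 1 x
          = algebraMap R (Localization S) (algebraMap C R (q - 1)⁻¹ * (↑t⁻¹ : R))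
            * (σδ.1 x - x))
      ∧ (∀ k x y, σδ.2 k (x + y) = σδ.2 k x + σδ.2 k y)
      ∧ (∀ k x y, σδ.2 k (x * y)
          = ∑ i ∈ Finset.range (k + 1), (⇑σδ.1)^[i] (σδ.2 (k - i) x) * σδ.2 i y)
      ∧ (∀ i j x, σδ.2 i (σδ.2 j x)
          = algebraMap R (Localization S) (algebraMap C R (qBinom q (i + j) i))
            * σδ.2 (i + j) x) := by
  have hδ : IsHigherSigmaDerivation (σ : R →+* R) δ := ⟨h0, hadd, hleib⟩
  have hσN : ∀ x, (σ : R →+* R)^[N] x = x :=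
    iterate_eq_self_of_isPrimitiveRoot (σ := (AlgEquiv.ofRingEquiv hσC : R →ₐ[C] R)) hN hq
      hσt h0 h1 hiter
  let σ₀ := localizationEndo (σ : R →+* R) hS
  have hσ₀ : ∀ x, σ₀ (algebraMap R _ x) = algebraMap R _ (σ x) :=
    localizationEndo_algebraMap hS
  let σL := σ₀.ringEquivOfPowEqOne (by omega) (localizationEndo_pow_eq_one hS hσN)
  have hd := hδ.isHigherSigmaDerivation_localize σ₀ hσ₀
  have hdR := hδ.localize_algebraMap σ₀ hσ₀
  refine ⟨(σL, hδ.localize σ₀ hσ₀), ⟨hσ₀, hdR, hd.order_zero,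
    hd.delta_one_eq_of_algebraMap S _ fun x => ?_, hd.additive, hd.leibniz,
    hd.comp_eq_of_algebraMap S (fun n i => algebraMap R _ (algebraMap C R (qBinom q n i)))
      fun i j x => ?_⟩, ?_⟩
  · rw [hdR, h1, map_mul, map_sub, hσ₀]
  · rw [hdR, hdR, hdR, hiter, map_mul]
  · rintro ⟨σ', d'⟩ ⟨hσ', hd', hd'0, -, hd'add, hd'leib, -⟩
    obtain rfl : σ' = σL := RingEquiv.toRingHom_injective <| IsLocalization.ringHom_ext S <|
      RingHom.ext fun x => (hσ' x).trans (hσ₀ x).symm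
    obtain rfl : d' = hδ.localize σ₀ hσ₀ := IsHigherSigmaDerivation.eq_of_algebraMap S
      ⟨hd'0, hd'add, hd'leib⟩ hd fun k x => (hd' k x).trans (hdR k x).symm
    rfl
end
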